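/- If G is a connected triangle-free simple graph with diam(G) = 3, then pc(Ḡ) = 2. -/

import Mathlib

/-!
Since `G` has two vertices at distance 3, `Gᶜ` is connected: if it were not, every vertex of a
component of `Gᶜ` would be `G`-adjacent to every vertex outside it, and `G` would have diameter
at most 2. Since `G` is triangle-free, `Gᶜ` has no independent set of size 3, and then a longest
path of `Gᶜ` is Hamiltonian: a vertex `w` off the path but adjacent to it is adjacent to neither
end, so the two ends are adjacent, the path closes to a cycle, and `w` followed by that cycle is
a longer path. Colouring the edges of a Hamiltonian path alternately joins any two vertices by a
properly coloured subpath, and one colour does not suffice since `Gᶜ` is not complete.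
-/

open SimpleGraph

/-- An edge-coloring `c` with `k` colors is a proper-path coloring of `G` if every pair of
distinct vertices is joined by a path on which no two consecutive edges share a color. -/
def IsProperPathColoring {V : Type*} (G : SimpleGraph V) {k : ℕ}
    (c : Sym2 V → Fin k) : Prop :=
  ∀ u v : V, u ≠ v → ∃ p : G.Walk u v, p.IsPath ∧ (p.edges.map c).Chain' (· ≠ ·)

/-- The proper connection number of `G`: the least number of colors in a
proper-path coloring of `G`. -/
noncomputable def pc {V : Type*} (G : SimpleGraph V) : ℕ :=
  sInf {k : ℕ | ∃ c : Sym2 V → Fin k, IsProperPathColoring G c}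

theorem List.Nodup.isChain_ne_map_idxOf_mod_two {α : Type*} [DecidableEq α] {l : List α}
    (hl : l.Nodup) : (l.map fun e => Fin.ofNat 2 (l.idxOf e)).IsChain (· ≠ ·) := by
  rw [List.isChain_iff_getElem]
  intro i hi
  simp only [List.getElem_map, hl.idxOf_getElem, Fin.ne_iff_vne, Fin.val_ofNat]
  omega

namespace SimpleGraph

variable {V : Type*} {G : SimpleGraph V}

theorem Walk.exists_isSubwalk_or_reverse_isSubwalk [DecidableEq V] {u v x y : V} (p : G.Walk u v)
    (hx : x ∈ p.support) (hy : y ∈ p.support) :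
    ∃ q : G.Walk x y, q.IsSubwalk p ∨ q.reverse.IsSubwalk p := by
  by_cases h : y ∈ (p.dropUntil x hx).support
  · exact ⟨_, Or.inl <| (isSubwalk_takeUntil _ h).trans (isSubwalk_dropUntil p hx)⟩
  · have hy' : y ∈ (p.takeUntil x hx).support := by
      rw [← p.take_spec hx, mem_support_append_iff] at hy
      tauto
    refine ⟨((p.takeUntil x hx).dropUntil y hy').reverse, Or.inr ?_⟩
    rw [reverse_reverse]
    exact (isSubwalk_dropUntil _ hy').trans (isSubwalk_takeUntil p hx)

theorem Walk.IsHamiltonian.isProperPathColoring [DecidableEq V] {u v : V} {p : G.Walk u v}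
    (hp : p.IsHamiltonian) : IsProperPathColoring G fun e => Fin.ofNat 2 (p.edges.idxOf e) := by
  intro x y _
  have hchain := hp.isPath.isTrail.edges_nodup.isChain_ne_map_idxOf_mod_two
  obtain ⟨q, hq | hq⟩ := p.exists_isSubwalk_or_reverse_isSubwalk (hp.mem_support x)
    (hp.mem_support y)
  · exact ⟨q, isPath_of_isSubwalk hq hp.isPath, hchain.infix (hq.edges_isInfix.map _)⟩
  · refine ⟨q, isPath_reverse_iff q |>.mp (isPath_of_isSubwalk hq hp.isPath), ?_⟩
    have := hchain.infix (hq.edges_isInfix.map _)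
    rw [edges_reverse, List.map_reverse, List.isChain_reverse] at this
    exact this.imp fun _ _ => Ne.symm

theorem IsProperPathColoring.adj {k : ℕ} {c : Sym2 V → Fin k} (hc : IsProperPathColoring G c)
    (hk : k ≤ 1) {u v : V} (huv : u ≠ v) : G.Adj u v := by
  have : Subsingleton (Fin k) := Fin.subsingleton_iff_le_one.mpr hk
  obtain ⟨p, -, hchain⟩ := hc u v huv
  match p, hchain with
  | .nil, _ => exact absurd rfl huv
  | .cons h .nil, _ => exact h
  | .cons _ (.cons _ _), hchain =>
    exact ((List.isChain_cons_cons.mp hchain).1 (Subsingleton.elim _ _)).elim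

theorem pc_eq_two {c : Sym2 V → Fin 2} (hc : IsProperPathColoring G c) {u v : V} (huv : u ≠ v)
    (hnadj : ¬G.Adj u v) : pc G = 2 := by
  refine le_antisymm (Nat.sInf_le ⟨c, hc⟩) (le_csInf ⟨2, c, hc⟩ ?_)
  rintro k ⟨c', hc'⟩
  by_contra! hk
  exact hnadj (hc'.adj (by omega) huv)

theorem connected_compl_of_two_lt_dist {a b : V} (h : 2 < G.dist a b) : Gᶜ.Connected := by
  have : Nonempty V := ⟨a⟩
  refine ⟨fun x y => ?_⟩
  by_contra hxy
  have adj_of_not_reachable : ∀ {s t}, ¬Gᶜ.Reachable s t → G.Adj s t := fun {s t} hst => by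
    simpa using (Gᶜ.reachable_or_compl_adj s t).resolve_left hst
  suffices G.dist a b ≤ 2 by omega
  by_cases hab : Gᶜ.Reachable a b
  · obtain ⟨m, ham⟩ : ∃ m, ¬Gᶜ.Reachable a m := by
      by_cases hax : Gᶜ.Reachable a x
      · exact ⟨y, fun hay => hxy (hax.symm.trans hay)⟩
      · exact ⟨x, hax⟩
    have hmb : ¬Gᶜ.Reachable m b := fun hmb => ham (hab.trans hmb.symm)
    exact G.dist_le (.cons (adj_of_not_reachable ham) (.cons (adj_of_not_reachable hmb) .nil))
  · exact (G.dist_le (adj_of_not_reachable hab).toWalk).trans (by simp)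

theorem exists_isPath_forall_isPath_length_le [Fintype V] [Nonempty V] (G : SimpleGraph V) :
    ∃ (u v : V) (p : G.Walk u v), p.IsPath ∧
      ∀ (a b : V) (q : G.Walk a b), q.IsPath → q.length ≤ p.length := by
  let lengths := {n : ℕ | ∃ (u v : V) (p : G.Walk u v), p.IsPath ∧ p.length = n}
  have hne : lengths.Nonempty := ⟨0, Classical.arbitrary V, _, .nil, by simp⟩
  have hbdd : BddAbove lengths :=
    ⟨Fintype.card V, by rintro _ ⟨_, _, p, hp, rfl⟩; exact hp.length_lt.le⟩
  obtain ⟨u, v, p, hp, hlen⟩ := Nat.sSup_mem hne hbdd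
  exact ⟨u, v, p, hp, fun a b q hq => hlen ▸ le_csSup hbdd ⟨a, b, q, hq, rfl⟩⟩

theorem Walk.IsCycle.exists_isPath_length_eq_of_adj [DecidableEq V] {v s w : V} {c : G.Walk v v}
    (hc : c.IsCycle) (hs : s ∈ c.support) (hw : w ∉ c.support) (hws : G.Adj w s) :
    ∃ (t : V) (q : G.Walk w t), q.IsPath ∧ q.length = c.length := by
  suffices ∀ c : G.Walk s s, c.IsCycle → w ∉ c.support →
      ∃ (t : V) (q : G.Walk w t), q.IsPath ∧ q.length = c.length by
    simpa using this _ (hc.rotate hs) (by simpa using hw)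
  rintro (_ | ⟨hb, q⟩) hc hw
  · exact absurd rfl hc.ne_nil
  · refine ⟨_, .cons hws q.reverse, ((cons_isCycle_iff q hb).mp hc).1.reverse.cons ?_, by simp⟩
    simpa using fun h => hw (by simp [h])

theorem Connected.exists_isHamiltonian_of_cliqueFree_compl [Fintype V] [DecidableEq V]
    (hG : G.Connected) (hα : Gᶜ.CliqueFree 3) :
    ∃ (u v : V) (p : G.Walk u v), p.IsHamiltonian := by
  have := hG.nonempty
  obtain ⟨u, v, p, hp, hmax⟩ := exists_isPath_forall_isPath_length_le G
  refine ⟨u, v, p, hp.isHamiltonian_of_mem fun x => ?_⟩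
  by_contra hx
  obtain ⟨d, -, hs, hw⟩ := (hG.preconnected u x).some.exists_boundary_dart
    {y | y ∈ p.support} p.start_mem_support hx
  obtain ⟨⟨s, w⟩, hsw⟩ := d
  simp only [Set.mem_ofPred_eq] at hs hw
  have hwu : ¬G.Adj w u := fun h => by simpa using hmax _ _ (.cons h p) (hp.cons hw)
  have hwv : ¬G.Adj w v := fun h => by
    simpa using hmax _ _ (.cons h p.reverse) (hp.reverse.cons (by simpa using hw))
  have hsu : s ≠ u := fun h => hwu (h ▸ hsw.symm)
  have hsv : s ≠ v := fun h => hwv (h ▸ hsw.symm)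
  have huv : u ≠ v := by
    rintro rfl
    simp [Walk.eq_nil_iff_nil.mpr (Walk.isPath_iff_nil.mp hp), hsu] at hs
  have hwu' : w ≠ u := fun h => hw (h ▸ p.start_mem_support)
  have hwv' : w ≠ v := fun h => hw (h ▸ p.end_mem_support)
  have hadj : G.Adj v u := by
    by_contra h
    exact hα {w, u, v} (is3Clique_triple_iff.mpr
      ⟨⟨hwu', hwu⟩, ⟨hwv', hwv⟩, ⟨huv, fun h' => h h'.symm⟩⟩)
  have hcycle : (Walk.cons hadj p).IsCycle := by
    refine (Walk.cons_isCycle_iff p hadj).mpr ⟨hp, fun he => ?_⟩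
    rw [hp.eq_adj_toWalk_of_mem_edges (Sym2.eq_swap ▸ he)] at hs
    simp_all
  obtain ⟨t, q, hq, hlen⟩ := hcycle.exists_isPath_length_eq_of_adj (s := s) (by simp [hs])
    (by simp [hwv', hw]) hsw.symm
  simpa [hlen] using hmax _ _ q hq

end SimpleGraph

theorem pc_compl_triangle_free_diam_three_general {V : Type*} [Fintype V] (G : SimpleGraph V)
    (htf : G.CliqueFree 3) (hd : G.diam = 3) :
    pc Gᶜ = 2 := by
  classical
  have : Nonempty V := (G.nontrivial_of_diam_ne_zero (by omega)).to_nonempty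
  obtain ⟨a, b, hab⟩ := G.exists_dist_eq_diam
  rw [hd] at hab
  obtain ⟨u, v, p, hp⟩ := (connected_compl_of_two_lt_dist (by omega : 2 < G.dist a b))
    |>.exists_isHamiltonian_of_cliqueFree_compl (by rwa [compl_compl])
  obtain ⟨hne, hreach⟩ := G.dist_ne_zero_iff_ne_and_reachable.mp (by omega : G.dist a b ≠ 0)
  have hadj := hreach.some.adj_snd (Walk.not_nil_of_ne hne)
  exact pc_eq_two hp.isProperPathColoring hadj.ne fun h => h.2 hadj

/-- If `G` is connected, triangle-free and has diameter 3, then `pc Gᶜ = 2`. -/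
theorem pc_compl_triangle_free_diam_three {V : Type*} [Fintype V] (G : SimpleGraph V)
    (hG : G.Connected) (htf : G.CliqueFree 3) (hd : G.diam = 3) :
    pc Gᶜ = 2 :=
  pc_compl_triangle_free_diam_three_general G htf hd
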